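/- arXiv:1703.09426 — 2 statements merged into one kernel-verified Lean document; each statement's English description precedes it below -/
import Mathlib

section
/- Under the hypotheses of the linear-convergence theorem for the double-layer fixed point algorithm (conditions (i), (ii), (iii) I_k ∩ Argmax_{j∈J_k} p_j(x^k) ≠ ∅ for every k, (iv) δ_r d(x, C_i) ≤ p_i(x) ≤ Δ_r ‖U_i x − x‖ for all x ∈ B(P_C x^0, r) and i ∈ I with r = d(x^0, C) > 0, and κ_r-linear regularity of the family {C_i} over B(P_C x^0, r)), the limit x^∞ ∈ C satisfies the error bound (δ_r/(2κ_r)) ‖x^k − x^∞‖ ≤ max_{i∈I} p_i(x^k) ≤ Δ_r c_r q_r^k for every k, where q_r := (1 − (ω⁻(2−α⁺)(α⁻)²/(s α⁺)) · (δ_r/(κ_r Δ_r))²)^{1/(2s)} and c_r := 2 d(x^0, C)/q_r^{s−1}. -/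
open Filter Function Metric Bornology RealInnerProductSpace

/-!
Each step is a relaxed average of cutters, so for every `z ∈ C` the squared distance
`‖x^k - z‖²` drops by at least `g_k := α_k (2 - α_k) Σ_{i ∈ I_k} ω_i^k ‖U_i x^k - x^k‖²`; in
particular `{x^k}` is Fejér monotone with respect to `C` and stays in `B(P_C x^0, r)`.
Within a block of `s` steps every index `i` is visited, at `x^{k+l}` say, and there (iii) and (iv)
bound `d(x^{k+l}, C_i)` by `Δ_r/δ_r` times a residual `‖U_j x^{k+l} - x^{k+l}‖` paid for by
`g_{k+l}`, while the path from `x^k` to `x^{k+l}` is paid for by `g_k, …, g_{k+l-1}`. A weighted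
Cauchy–Schwarz inequality and linear regularity give `β d(x^k, C)² ≤ g_k + ⋯ + g_{k+s-1}`, hence
`d(x^{k+s}, C) ≤ √(1 - β) d(x^k, C) = q_r^s d(x^k, C)`. The upper error bound follows from
`max_i p_i ≤ Δ_r d(·, C)`, a consequence of (iv) and `‖U_i x - x‖ ≤ d(x, C_i)`; the lower one from
`‖x^k - x^∞‖ ≤ 2 d(x^k, C)` (Fejér monotonicity) and linear regularity.
-/

section Cutter

variable {H : Type*} [NormedAddCommGroup H] [InnerProductSpace ℝ H]

def IsCutter (U : H → H) : Prop :=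
  ∀ x, ∀ z ∈ fixedPoints U, ⟪x - U x, z - U x⟫ ≤ 0

variable {U : H → H}

theorem IsCutter.norm_sub_sq_le_inner (hU : IsCutter U) (x : H) {z : H}
    (hz : z ∈ fixedPoints U) : ‖U x - x‖ ^ 2 ≤ ⟪z - x, U x - x⟫ := by
  have h := hU x z hz
  rw [show z - U x = (z - x) - (U x - x) by abel, show x - U x = -(U x - x) by abel,
    inner_neg_left, inner_sub_right, real_inner_self_eq_norm_sq, real_inner_comm] at h
  linarith

theorem IsCutter.norm_sub_le_dist (hU : IsCutter U) (x : H) {z : H}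
    (hz : z ∈ fixedPoints U) : ‖U x - x‖ ≤ dist x z := by
  have h := (hU.norm_sub_sq_le_inner x hz).trans (real_inner_le_norm _ _)
  rw [dist_comm, dist_eq_norm]
  nlinarith [norm_nonneg (U x - x), norm_nonneg (z - x)]

theorem IsCutter.norm_sub_le_infDist (hU : IsCutter U) (hne : (fixedPoints U).Nonempty)
    (x : H) : ‖U x - x‖ ≤ infDist x (fixedPoints U) :=
  (le_infDist hne).2 fun _ hz => hU.norm_sub_le_dist x hz

end Cutter

theorem norm_sum_smul_sq_le {ι E : Type*} [SeminormedAddCommGroup E] [NormedSpace ℝ E]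
    {s : Finset ι} {w : ι → ℝ} (y : ι → E) (hw : ∀ i ∈ s, 0 ≤ w i)
    (hw₁ : ∑ i ∈ s, w i = 1) : ‖∑ i ∈ s, w i • y i‖ ^ 2 ≤ ∑ i ∈ s, w i * ‖y i‖ ^ 2 := by
  have hnorm : ‖∑ i ∈ s, w i • y i‖ ≤ ∑ i ∈ s, w i * ‖y i‖ :=
    (norm_sum_le _ _).trans_eq <| Finset.sum_congr rfl fun i hi => by
      rw [norm_smul, Real.norm_of_nonneg (hw i hi)]
  calc ‖∑ i ∈ s, w i • y i‖ ^ 2 ≤ (∑ i ∈ s, w i * ‖y i‖) ^ 2 := by gcongr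
    _ ≤ (∑ i ∈ s, w i) * ∑ i ∈ s, w i * ‖y i‖ ^ 2 :=
      Finset.sum_sq_le_sum_mul_sum_of_sq_le_mul s hw
        (fun i hi => mul_nonneg (hw i hi) (sq_nonneg _)) fun i _ => le_of_eq (by ring)
    _ = ∑ i ∈ s, w i * ‖y i‖ ^ 2 := by rw [hw₁, one_mul]

section Gain

variable {ι H : Type*} [SeminormedAddCommGroup H] (U : ι → H → H) (I : Finset ι) (ω : ι → ℝ)
  (α : ℝ) (x : H)

def relaxedAverageGain : ℝ :=
  α * (2 - α) * ∑ i ∈ I, ω i * ‖U i x - x‖ ^ 2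

variable {U I ω α x}

theorem relaxedAverageGain_nonneg (hω : ∀ i ∈ I, 0 ≤ ω i) (hα₀ : 0 ≤ α) (hα₂ : α ≤ 2) :
    0 ≤ relaxedAverageGain U I ω α x :=
  mul_nonneg (mul_nonneg hα₀ (by linarith))
    (Finset.sum_nonneg fun i hi => mul_nonneg (hω i hi) (sq_nonneg _))

theorem mul_norm_sub_sq_le_relaxedAverageGain {αminus αplus ωminus : ℝ} (hαminus : 0 ≤ αminus)
    (hα : α ∈ Set.Icc αminus αplus) (hαplus : αplus ≤ 2) (hωminus : 0 ≤ ωminus)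
    (hω : ∀ i ∈ I, ωminus ≤ ω i) {i : ι} (hi : i ∈ I) :
    αminus * (2 - αplus) * ωminus * ‖U i x - x‖ ^ 2 ≤ relaxedAverageGain U I ω α x := by
  have hsum : ωminus * ‖U i x - x‖ ^ 2 ≤ ∑ i ∈ I, ω i * ‖U i x - x‖ ^ 2 :=
    (mul_le_mul_of_nonneg_right (hω i hi) (sq_nonneg _)).trans <|
      Finset.single_le_sum (f := fun i => ω i * ‖U i x - x‖ ^ 2)
        (fun j hj => mul_nonneg (hωminus.trans (hω j hj)) (sq_nonneg _)) hi
  rw [mul_assoc, relaxedAverageGain]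
  exact mul_le_mul (mul_le_mul hα.1 (by linarith [hα.2]) (by linarith) (by linarith [hα.1]))
    hsum (by positivity) (by nlinarith [hα.1, hα.2])

end Gain

section RelaxedAverage

variable {ι H : Type*} [NormedAddCommGroup H] [InnerProductSpace ℝ H]
  (U : ι → H → H) (I : Finset ι) (ω : ι → ℝ) (α : ℝ) (x : H)

def relaxedAverage : H :=
  x + α • ((∑ i ∈ I, ω i • U i x) - x)

variable {U I ω α x}

theorem relaxedAverage_sub_self (hω₁ : ∑ i ∈ I, ω i = 1) :
    relaxedAverage U I ω α x - x = α • ∑ i ∈ I, ω i • (U i x - x) := by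
  simp only [relaxedAverage, smul_sub, Finset.sum_sub_distrib, ← Finset.sum_smul, hω₁,
    one_smul, add_sub_cancel_left]

theorem mul_dist_relaxedAverage_sq_le_relaxedAverageGain {αplus : ℝ} (hα₀ : 0 < α) (hα : α ≤ αplus)
    (hαplus₂ : αplus ≤ 2) (hω : ∀ i ∈ I, 0 ≤ ω i) (hω₁ : ∑ i ∈ I, ω i = 1) :
    (2 - αplus) / αplus * dist x (relaxedAverage U I ω α x) ^ 2 ≤
      relaxedAverageGain U I ω α x := by
  have hαplus : 0 < αplus := hα₀.trans_le hα
  have hS : 0 ≤ ∑ i ∈ I, ω i * ‖U i x - x‖ ^ 2 :=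
    Finset.sum_nonneg fun i hi => mul_nonneg (hω i hi) (sq_nonneg _)
  have hnorm : dist x (relaxedAverage U I ω α x) ^ 2 ≤ α ^ 2 * ∑ i ∈ I, ω i * ‖U i x - x‖ ^ 2 := by
    rw [dist_comm, dist_eq_norm, relaxedAverage_sub_self hω₁, norm_smul, mul_pow,
      Real.norm_eq_abs, sq_abs]
    exact mul_le_mul_of_nonneg_left (norm_sum_smul_sq_le _ hω hω₁) (sq_nonneg α)
  have hcoeff : (2 - αplus) / αplus * α ^ 2 ≤ α * (2 - α) := by
    rw [div_mul_eq_mul_div, div_le_iff₀ hαplus]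
    nlinarith
  calc (2 - αplus) / αplus * dist x (relaxedAverage U I ω α x) ^ 2
      ≤ (2 - αplus) / αplus * (α ^ 2 * ∑ i ∈ I, ω i * ‖U i x - x‖ ^ 2) :=
        mul_le_mul_of_nonneg_left hnorm (div_nonneg (by linarith) hαplus.le)
    _ = (2 - αplus) / αplus * α ^ 2 * ∑ i ∈ I, ω i * ‖U i x - x‖ ^ 2 := by ring
    _ ≤ relaxedAverageGain U I ω α x := mul_le_mul_of_nonneg_right hcoeff hS

theorem dist_relaxedAverage_sq_add_relaxedAverageGain_le (hU : ∀ i ∈ I, IsCutter (U i))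
    (hα : 0 ≤ α) (hω : ∀ i ∈ I, 0 ≤ ω i) (hω₁ : ∑ i ∈ I, ω i = 1) {z : H}
    (hz : ∀ i ∈ I, z ∈ fixedPoints (U i)) :
    dist (relaxedAverage U I ω α x) z ^ 2 + relaxedAverageGain U I ω α x ≤ dist x z ^ 2 := by
  rw [relaxedAverageGain]
  set v := ∑ i ∈ I, ω i • (U i x - x)
  set S := ∑ i ∈ I, ω i * ‖U i x - x‖ ^ 2
  have hv : S ≤ ⟪z - x, v⟫ := by
    rw [inner_sum]
    refine Finset.sum_le_sum fun i hi => ?_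
    rw [real_inner_smul_right]
    exact mul_le_mul_of_nonneg_left ((hU i hi).norm_sub_sq_le_inner x (hz i hi)) (hω i hi)
  have hexpand : dist (relaxedAverage U I ω α x) z ^ 2
      = dist x z ^ 2 - 2 * α * ⟪z - x, v⟫ + α ^ 2 * ‖v‖ ^ 2 := by
    rw [dist_eq_norm, dist_eq_norm, show relaxedAverage U I ω α x - z = (x - z) + α • v by
      rw [← relaxedAverage_sub_self hω₁]; abel, norm_add_sq_real, real_inner_smul_right,
      norm_smul, mul_pow, Real.norm_eq_abs, sq_abs, ← neg_sub z x, inner_neg_left]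
    ring
  have hvS : ‖v‖ ^ 2 ≤ S := norm_sum_smul_sq_le _ hω hω₁
  rw [hexpand]
  nlinarith [mul_le_mul_of_nonneg_left hvS (sq_nonneg α), mul_le_mul_of_nonneg_left hv hα]

end RelaxedAverage

section Fejer

variable {X : Type*} [PseudoMetricSpace X] {x : ℕ → X} {C : Set X} {g : ℕ → ℝ}

theorem sq_dist_add_sum_le_of_sq_dist_succ_add_le
    (hx : ∀ z ∈ C, ∀ k, dist (x (k + 1)) z ^ 2 + g k ≤ dist (x k) z ^ 2) {z : X} (hz : z ∈ C)
    (k n : ℕ) : dist (x (k + n)) z ^ 2 + ∑ t ∈ Finset.range n, g (k + t) ≤ dist (x k) z ^ 2 := by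
  induction n with
  | zero => simp
  | succ n ih =>
    rw [Finset.sum_range_succ, ← add_assoc k n 1]
    linarith [hx z hz (k + n)]

theorem sq_infDist_add_sum_le_of_sq_dist_succ_add_le (hC : C.Nonempty)
    (hx : ∀ z ∈ C, ∀ k, dist (x (k + 1)) z ^ 2 + g k ≤ dist (x k) z ^ 2) (k n : ℕ) :
    infDist (x (k + n)) C ^ 2 + ∑ t ∈ Finset.range n, g (k + t) ≤ infDist (x k) C ^ 2 := by
  set L := infDist (x (k + n)) C ^ 2 + ∑ t ∈ Finset.range n, g (k + t)
  have hsqrt : √L ≤ infDist (x k) C := (le_infDist hC).2 fun z hz => by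
    rw [Real.sqrt_le_left dist_nonneg]
    have := sq_dist_add_sum_le_of_sq_dist_succ_add_le hx hz k n
    have := pow_le_pow_left₀ infDist_nonneg (infDist_le_dist_of_mem (x := x (k + n)) hz) 2
    linarith
  exact (Real.sqrt_le_left infDist_nonneg).1 hsqrt

theorem infDist_add_le_sqrt_one_sub_mul (hC : C.Nonempty)
    (hx : ∀ z ∈ C, ∀ k, dist (x (k + 1)) z ^ 2 + g k ≤ dist (x k) z ^ 2) {β : ℝ} {s : ℕ}
    (hblock : ∀ k, β * infDist (x k) C ^ 2 ≤ ∑ t ∈ Finset.range s, g (k + t)) (k : ℕ) :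
    infDist (x (k + s)) C ≤ √(1 - β) * infDist (x k) C := by
  have hsq : infDist (x (k + s)) C ^ 2 ≤ (1 - β) * infDist (x k) C ^ 2 := by
    linarith [sq_infDist_add_sum_le_of_sq_dist_succ_add_le hC hx k s, hblock k]
  calc infDist (x (k + s)) C ≤ √((1 - β) * infDist (x k) C ^ 2) :=
        (le_abs_self _).trans (Real.abs_le_sqrt hsq)
    _ = √(1 - β) * infDist (x k) C := by
      rw [Real.sqrt_mul' _ (sq_nonneg _), Real.sqrt_sq infDist_nonneg]

theorem antitone_dist_of_sq_dist_succ_add_le (hg : ∀ k, 0 ≤ g k)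
    (hx : ∀ z ∈ C, ∀ k, dist (x (k + 1)) z ^ 2 + g k ≤ dist (x k) z ^ 2) {z : X} (hz : z ∈ C) :
    Antitone fun k => dist (x k) z :=
  antitone_nat_of_succ_le fun k =>
    (pow_le_pow_iff_left₀ dist_nonneg dist_nonneg two_ne_zero).1 (by linarith [hx z hz k, hg k])

theorem antitone_infDist_of_antitone_dist (hC : C.Nonempty)
    (hx : ∀ z ∈ C, Antitone fun k => dist (x k) z) : Antitone fun k => infDist (x k) C :=
  fun _ _ hkj => (le_infDist hC).2 fun _ hz => (infDist_le_dist_of_mem hz).trans (hx _ hz hkj)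

theorem dist_le_two_mul_infDist_of_tendsto (hC : C.Nonempty)
    (hx : ∀ z ∈ C, Antitone fun k => dist (x k) z) {x' : X} (hlim : Tendsto x atTop (nhds x'))
    (k : ℕ) : dist (x k) x' ≤ 2 * infDist (x k) C := by
  suffices dist (x k) x' / 2 ≤ infDist (x k) C by linarith
  refine (le_infDist hC).2 fun z hz => ?_
  have hlim' : dist x' z ≤ dist (x k) z :=
    (hx z hz).le_of_tendsto (hlim.dist tendsto_const_nhds) k
  linarith [dist_triangle_right (x k) x' z]

end Fejer

section LinearRate

variable {s : ℕ}

theorem mul_pow_pred_le_mul_pow {d : ℕ → ℝ} {q : ℝ} (hs : 1 ≤ s) (hd : Antitone d)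
    (hd₀ : 0 ≤ d 0) (hq₀ : 0 ≤ q) (hq₁ : q ≤ 1) (hstep : ∀ k, d (k + s) ≤ q ^ s * d k) (k : ℕ) :
    d k * q ^ (s - 1) ≤ d 0 * q ^ k := by
  have hblock : ∀ n, d (n * s) ≤ q ^ (n * s) * d 0 := by
    intro n
    induction n with
    | zero => simp
    | succ n ih =>
      calc d ((n + 1) * s) = d (n * s + s) := by rw [add_one_mul]
        _ ≤ q ^ s * d (n * s) := hstep _
        _ ≤ q ^ s * (q ^ (n * s) * d 0) := by gcongr
        _ = q ^ ((n + 1) * s) * d 0 := by ring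
  have hk : k ≤ k / s * s + (s - 1) := by
    have := Nat.div_add_mod k s
    have := Nat.mod_lt k hs
    rw [Nat.mul_comm]; omega
  calc d k * q ^ (s - 1) ≤ q ^ (k / s * s) * d 0 * q ^ (s - 1) :=
        mul_le_mul_of_nonneg_right ((hd (Nat.div_mul_le_self k s)).trans (hblock _))
          (pow_nonneg hq₀ _)
    _ = d 0 * q ^ (k / s * s + (s - 1)) := by ring
    _ ≤ d 0 * q ^ k := mul_le_mul_of_nonneg_left (pow_le_pow_of_le_one hq₀ hq₁ hk) hd₀

theorem rpow_one_div_two_mul_pow {a : ℝ} (ha : 0 ≤ a) (hs : s ≠ 0) :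
    (a ^ ((1 : ℝ) / (2 * (s : ℝ)))) ^ s = √a := by
  rw [← Real.rpow_natCast, ← Real.rpow_mul ha, Real.sqrt_eq_rpow]
  congr 1
  field_simp

theorem rpow_one_div_two_mul_pow_pred_pos {β : ℝ} (hβ : β ≤ 1 / s) :
    0 < ((1 - β) ^ ((1 : ℝ) / (2 * (s : ℝ)))) ^ (s - 1) := by
  match s, hβ with
  | 0, _ => simp
  | 1, _ => simp
  | s + 2, hβ =>
    have : 1 / ((s + 2 : ℕ) : ℝ) < 1 := by
      rw [div_lt_one (by positivity)]; push_cast; linarith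
    exact pow_pos (Real.rpow_pos_of_pos (by linarith) _) _

theorem le_div_mul_rpow_pow_of_le_sqrt_mul {d : ℕ → ℝ} {β : ℝ} (hs : 1 ≤ s) (hd : Antitone d)
    (hd₀ : 0 ≤ d 0) (hβ₀ : 0 ≤ β) (hβ : β ≤ 1 / s) (hstep : ∀ k, d (k + s) ≤ √(1 - β) * d k)
    (k : ℕ) :
    d k ≤ d 0 / ((1 - β) ^ ((1 : ℝ) / (2 * (s : ℝ)))) ^ (s - 1) *
      ((1 - β) ^ ((1 : ℝ) / (2 * (s : ℝ)))) ^ k := by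
  have hβ₁ : β ≤ 1 := hβ.trans (div_le_one_of_le₀ (by exact_mod_cast hs) (Nat.cast_nonneg s))
  rw [div_mul_eq_mul_div, le_div_iff₀ (rpow_one_div_two_mul_pow_pred_pos hβ)]
  refine mul_pow_pred_le_mul_pow hs hd hd₀ (Real.rpow_nonneg (by linarith) _)
    (Real.rpow_le_one (by linarith) (by linarith) (by positivity)) (fun k => ?_) k
  rw [rpow_one_div_two_mul_pow (by linarith) (by omega)]
  exact hstep k

end LinearRate

theorem add_sq_le_add_mul_add {u v P Q X Y : ℝ} (hP : 0 ≤ P) (hQ : 0 ≤ Q) (hX : 0 ≤ X)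
    (hY : 0 ≤ Y) (hu : u ^ 2 ≤ P * X) (hv : v ^ 2 ≤ Q * Y) : (u + v) ^ 2 ≤ (P + Q) * (X + Y) := by
  have h : 2 * (u * v) ≤ P * Y + Q * X :=
    two_mul_le_add_of_sq_le_mul (mul_nonneg hP hY) (mul_nonneg hQ hX) <| by
      rw [mul_pow]
      calc u ^ 2 * v ^ 2 ≤ (P * X) * (Q * Y) := mul_le_mul hu hv (sq_nonneg _) (by positivity)
        _ = P * Y * (Q * X) := by ring
  nlinarith

/-- Weighted Cauchy–Schwarz for a bound by `l < s` steps `e t` and a residual `a`, each paid for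
by a gain `D t`. -/
theorem sq_le_mul_sum_of_le_sum_add {e D : ℕ → ℝ} {d a c we wa : ℝ} {l s : ℕ} (hls : l < s)
    (hwe : 0 < we) (hwa : 0 < wa) (hD : ∀ t, 0 ≤ D t) (hd₀ : 0 ≤ d)
    (hd : d ≤ ∑ t ∈ Finset.range l, e t + c * a) (he : ∀ t < l, we * e t ^ 2 ≤ D t)
    (ha : wa * a ^ 2 ≤ D l) :
    d ^ 2 ≤ ((s - 1) / we + c ^ 2 / wa) * ∑ t ∈ Finset.range s, D t := by
  have hsteps : (∑ t ∈ Finset.range l, e t) ^ 2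
      ≤ (∑ _t ∈ Finset.range l, 1 / we) * ∑ t ∈ Finset.range l, D t :=
    Finset.sum_sq_le_sum_mul_sum_of_sq_le_mul _ (fun _ _ => by positivity) (fun t _ => hD t)
      fun t ht => by
        rw [one_div_mul_eq_div, le_div_iff₀ hwe, mul_comm]
        exact he t (Finset.mem_range.1 ht)
  have hres : (c * a) ^ 2 ≤ c ^ 2 / wa * D l := by
    rw [mul_pow, div_mul_eq_mul_div, le_div_iff₀ hwa, mul_assoc]
    exact mul_le_mul_of_nonneg_left (by linarith) (sq_nonneg c)
  rw [Finset.sum_const, Finset.card_range, nsmul_eq_mul, mul_one_div] at hsteps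
  have hl : (l : ℝ) ≤ s - 1 := by
    rw [le_sub_iff_add_le]; exact_mod_cast hls
  calc d ^ 2 ≤ (∑ t ∈ Finset.range l, e t + c * a) ^ 2 := pow_le_pow_left₀ hd₀ hd 2
    _ ≤ (l / we + c ^ 2 / wa) * ∑ t ∈ Finset.range (l + 1), D t := by
      rw [Finset.sum_range_succ]
      exact add_sq_le_add_mul_add (by positivity) (by positivity)
        (Finset.sum_nonneg fun t _ => hD t) (hD l) hsteps hres
    _ ≤ ((s - 1) / we + c ^ 2 / wa) * ∑ t ∈ Finset.range s, D t := by
      have hP : 0 ≤ (s - 1) / we + c ^ 2 / wa :=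
        add_nonneg (div_nonneg ((Nat.cast_nonneg l).trans hl) hwe.le) (by positivity)
      exact mul_le_mul (by gcongr)
        (Finset.sum_le_sum_of_subset_of_nonneg (Finset.range_subset_range.2 hls)
          fun t _ _ => hD t) (Finset.sum_nonneg fun t _ => hD t) hP

section Regularity

variable {ι : Type*} [Fintype ι] [Nonempty ι]

theorem one_le_of_infDist_iInter_le_mul_sup' {X : Type*} [PseudoMetricSpace X] {C : ι → Set X}
    {κ : ℝ} {y : X} (hC : (⋂ i, C i).Nonempty) (hy : 0 < infDist y (⋂ i, C i))
    (hlinreg : infDist y (⋂ i, C i) ≤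
      κ * Finset.univ.sup' Finset.univ_nonempty fun i => infDist y (C i)) : 1 ≤ κ := by
  have hsup : (Finset.univ.sup' Finset.univ_nonempty fun i => infDist y (C i)) ≤
      infDist y (⋂ i, C i) :=
    Finset.sup'_le _ _ fun i _ => infDist_le_infDist_of_subset (Set.iInter_subset _ i) hC
  have hsup₀ : 0 < Finset.univ.sup' Finset.univ_nonempty fun i => infDist y (C i) := by
    refine lt_of_le_of_ne ((infDist_nonneg (x := y) (s := C (Classical.arbitrary ι))).trans
      (Finset.le_sup' (fun i => infDist y (C i)) (Finset.mem_univ _))) fun h => ?_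
    rw [← h, mul_zero] at hlinreg
    linarith
  exact le_of_mul_le_mul_right (by linarith) hsup₀

theorem mul_infDist_iInter_le_mul_sup' {X : Type*} [PseudoMetricSpace X] {C : ι → Set X}
    {p : ι → X → ℝ} {δ κ : ℝ} {y : X} (hδ : 0 ≤ δ) (hκ : 0 ≤ κ)
    (hp : ∀ i, δ * infDist y (C i) ≤ p i y)
    (hlinreg : infDist y (⋂ i, C i) ≤
      κ * Finset.univ.sup' Finset.univ_nonempty fun i => infDist y (C i)) :
    δ * infDist y (⋂ i, C i) ≤ κ * Finset.univ.sup' Finset.univ_nonempty fun i => p i y := by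
  obtain ⟨i, -, hi⟩ := Finset.exists_mem_eq_sup' Finset.univ_nonempty
    fun i => infDist y (C i)
  rw [hi] at hlinreg
  calc δ * infDist y (⋂ i, C i) ≤ δ * (κ * infDist y (C i)) := by gcongr
    _ = κ * (δ * infDist y (C i)) := by ring
    _ ≤ κ * Finset.univ.sup' Finset.univ_nonempty fun i => p i y :=
      mul_le_mul_of_nonneg_left
        ((hp i).trans (Finset.le_sup' (fun i => p i y) (Finset.mem_univ i))) hκ

theorem div_two_mul_mul_dist_le_sup' {X : Type*} [PseudoMetricSpace X] {C : ι → Set X}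
    {p : ι → X → ℝ} {δ κ : ℝ} {y y' : X} (hδ : 0 ≤ δ) (hκ : 0 < κ)
    (hp : ∀ i, δ * infDist y (C i) ≤ p i y)
    (hlinreg : infDist y (⋂ i, C i) ≤
      κ * Finset.univ.sup' Finset.univ_nonempty fun i => infDist y (C i))
    (hy' : dist y y' ≤ 2 * infDist y (⋂ i, C i)) :
    δ / (2 * κ) * dist y y' ≤ Finset.univ.sup' Finset.univ_nonempty fun i => p i y := by
  have h := mul_infDist_iInter_le_mul_sup' hδ hκ.le hp hlinreg
  rw [div_mul_eq_mul_div, div_le_iff₀ (by positivity)]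
  nlinarith

variable {H : Type*} [NormedAddCommGroup H] [InnerProductSpace ℝ H] {U : ι → H → H}
  {p : ι → H → ℝ} {y : H}

theorem sup'_le_mul_infDist_iInter {Δ : ℝ} (hU : ∀ i, IsCutter (U i))
    (hC : (⋂ i, fixedPoints (U i)).Nonempty) (hΔ : 0 ≤ Δ) (hp : ∀ i, p i y ≤ Δ * ‖U i y - y‖) :
    (Finset.univ.sup' Finset.univ_nonempty fun i => p i y) ≤
      Δ * infDist y (⋂ i, fixedPoints (U i)) :=
  Finset.sup'_le _ _ fun i _ => (hp i).trans <| mul_le_mul_of_nonneg_left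
    (((hU i).norm_sub_le_infDist (hC.mono (Set.iInter_subset _ i)) y).trans
      (infDist_le_infDist_of_subset (Set.iInter_subset _ i) hC)) hΔ

theorem le_of_proximity_bounds {δ Δ κ : ℝ} (hU : ∀ i, IsCutter (U i))
    (hC : (⋂ i, fixedPoints (U i)).Nonempty) (hΔ : 0 ≤ Δ) (hκ : 0 ≤ κ)
    (hy : 0 < infDist y (⋂ i, fixedPoints (U i)))
    (hlinreg : infDist y (⋂ i, fixedPoints (U i)) ≤
      κ * Finset.univ.sup' Finset.univ_nonempty fun i => infDist y (fixedPoints (U i)))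
    (hbound : ∀ i, δ * infDist y (fixedPoints (U i)) ≤ p i y ∧ p i y ≤ Δ * ‖U i y - y‖) :
    δ ≤ Δ := by
  obtain ⟨i, -, hi⟩ := (Finset.lt_sup'_iff _).1 (pos_of_mul_pos_right (hy.trans_le hlinreg) hκ)
  refine le_of_mul_le_mul_right ((hbound i).1.trans ((hbound i).2.trans ?_)) hi
  exact mul_le_mul_of_nonneg_left
    ((hU i).norm_sub_le_infDist (hC.mono (Set.iInter_subset _ i)) y) hΔ

end Regularity

theorem sq_infDist_iInter_le_mul_sum {ι H : Type*} [Fintype ι] [Nonempty ι]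
    [SeminormedAddCommGroup H] (U : ι → H → H) (p : ι → H → ℝ) (x : ℕ → H) (I J : ℕ → Finset ι)
    (g : ℕ → ℝ) {s k : ℕ} {δ Δ κ we wa : ℝ} (hδ : 0 < δ) (hwe : 0 < we) (hwa : 0 < wa)
    (hg : ∀ t, 0 ≤ g t) (hstep : ∀ t, we * dist (x t) (x (t + 1)) ^ 2 ≤ g t)
    (hres : ∀ t, ∀ i ∈ I t, wa * ‖U i (x t) - x t‖ ^ 2 ≤ g t)
    (hcover : ∀ i, ∃ l < s, i ∈ J (k + l))
    (hmax : ∀ t, ∃ i ∈ I t, ∀ j ∈ J t, p j (x t) ≤ p i (x t))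
    (hbound : ∀ t, ∀ i, δ * infDist (x t) (fixedPoints (U i)) ≤ p i (x t) ∧
      p i (x t) ≤ Δ * ‖U i (x t) - x t‖)
    (hlinreg : infDist (x k) (⋂ i, fixedPoints (U i)) ≤
      κ * Finset.univ.sup' Finset.univ_nonempty fun i => infDist (x k) (fixedPoints (U i))) :
    infDist (x k) (⋂ i, fixedPoints (U i)) ^ 2 ≤
      κ ^ 2 * ((s - 1) / we + (Δ / δ) ^ 2 / wa) * ∑ t ∈ Finset.range s, g (k + t) := by
  obtain ⟨i, -, hi⟩ := Finset.exists_mem_eq_sup' Finset.univ_nonempty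
    fun i => infDist (x k) (fixedPoints (U i))
  obtain ⟨l, hls, hiJ⟩ := hcover i
  obtain ⟨j, hjI, hj⟩ := hmax (k + l)
  have hvisit :
      infDist (x (k + l)) (fixedPoints (U i)) ≤ Δ / δ * ‖U j (x (k + l)) - x (k + l)‖ := by
    rw [div_mul_eq_mul_div, le_div_iff₀ hδ, mul_comm]
    exact (hbound _ i).1.trans ((hj i hiJ).trans (hbound _ j).2)
  have hchain : infDist (x k) (fixedPoints (U i)) ≤
      ∑ t ∈ Finset.range l, dist (x (k + t)) (x (k + t + 1)) +
        Δ / δ * ‖U j (x (k + l)) - x (k + l)‖ := by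
    calc _ ≤ infDist (x (k + l)) (fixedPoints (U i)) + dist (x k) (x (k + l)) :=
          infDist_le_infDist_add_dist
      _ ≤ _ := by
        rw [add_comm]
        exact add_le_add (dist_le_range_sum_dist (fun t => x (k + t)) l) hvisit
  have hsq := sq_le_mul_sum_of_le_sum_add hls hwe hwa (fun t => hg (k + t)) infDist_nonneg
    hchain (fun t _ => hstep (k + t)) (hres (k + l) j hjI)
  rw [hi] at hlinreg
  calc _ ≤ (κ * infDist (x k) (fixedPoints (U i))) ^ 2 :=
        pow_le_pow_left₀ infDist_nonneg hlinreg 2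
    _ = κ ^ 2 * infDist (x k) (fixedPoints (U i)) ^ 2 := mul_pow _ _ _
    _ ≤ _ := (mul_le_mul_of_nonneg_left hsq (sq_nonneg κ)).trans_eq (mul_assoc _ _ _).symm

section BlockDecrease

/-- `q_r = (1 - blockDecrease …) ^ (1 / (2 s))`: the fraction of `d(x^k, C)²` that every block of
`s` steps removes. -/
noncomputable abbrev blockDecrease (αminus αplus ωminus δ Δ κ : ℝ) (s : ℕ) : ℝ :=
  ωminus * (2 - αplus) * αminus ^ 2 / ((s : ℝ) * αplus) * (δ / (κ * Δ)) ^ 2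

variable {αminus αplus ωminus δ Δ κ : ℝ} {s : ℕ}

theorem blockDecrease_nonneg (hαplus : αplus ∈ Set.Ico (1 : ℝ) 2)
    (hωminus : ωminus ∈ Set.Ioc (0 : ℝ) 1) :
    0 ≤ blockDecrease αminus αplus ωminus δ Δ κ s := by
  have h2αp : 0 ≤ 2 - αplus := by linarith [hαplus.2]
  have hαp : 0 ≤ αplus := by linarith [hαplus.1]
  exact mul_nonneg (div_nonneg (mul_nonneg (mul_nonneg hωminus.1.le h2αp) (sq_nonneg _))
    (mul_nonneg (Nat.cast_nonneg s) hαp)) (sq_nonneg _)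

theorem blockDecrease_le_inv (hαminus : αminus ∈ Set.Ioc (0 : ℝ) 1)
    (hαplus : αplus ∈ Set.Ico (1 : ℝ) 2) (hωminus : ωminus ∈ Set.Ioc (0 : ℝ) 1) (hδ : 0 ≤ δ)
    (hδΔ : δ ≤ Δ) (hκ : 1 ≤ κ) :
    blockDecrease αminus αplus ωminus δ Δ κ s ≤ 1 / s := by
  obtain ⟨hαm₀, hαm₁⟩ := hαminus
  obtain ⟨hαp₁, hαp₂⟩ := hαplus
  obtain ⟨hωm₀, hωm₁⟩ := hωminus
  have hΔ : 0 ≤ Δ := hδ.trans hδΔ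
  have hκΔ : 0 ≤ κ * Δ := mul_nonneg (by linarith) hΔ
  have hratio : (δ / (κ * Δ)) ^ 2 ≤ 1 :=
    pow_le_one₀ (div_nonneg hδ hκΔ) (div_le_one_of_le₀ (by nlinarith) hκΔ)
  have hα : αminus ^ 2 / αplus ≤ 1 :=
    div_le_one_of_le₀ (by nlinarith) (by linarith)
  rw [blockDecrease, show ωminus * (2 - αplus) * αminus ^ 2 / ((s : ℝ) * αplus) * (δ / (κ * Δ)) ^ 2
      = ωminus * (2 - αplus) * (αminus ^ 2 / αplus) * (δ / (κ * Δ)) ^ 2 / s by ring]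
  gcongr
  exact mul_le_one₀ (mul_le_one₀ (mul_le_one₀ hωm₁ (by linarith) (by linarith)) (by positivity)
    hα) (by positivity) hratio

theorem blockDecrease_mul_le_one (hαminus : αminus ∈ Set.Ioc (0 : ℝ) 1)
    (hαplus : αplus ∈ Set.Ico (1 : ℝ) 2) (hωminus : ωminus ∈ Set.Ioc (0 : ℝ) 1) (hδ : 0 < δ)
    (hδΔ : δ ≤ Δ) (hκ : 0 < κ) (hs : 1 ≤ s) :
    blockDecrease αminus αplus ωminus δ Δ κ s *
      (κ ^ 2 * ((s - 1) / ((2 - αplus) / αplus) +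
        (Δ / δ) ^ 2 / (αminus * (2 - αplus) * ωminus))) ≤ 1 := by
  obtain ⟨hαm₀, hαm₁⟩ := hαminus
  obtain ⟨hαp₁, hαp₂⟩ := hαplus
  obtain ⟨hωm₀, hωm₁⟩ := hωminus
  have hs' : (1 : ℝ) ≤ s := by exact_mod_cast hs
  have h2αp : 0 < 2 - αplus := by linarith
  have hΔ : 0 < Δ := hδ.trans_le hδΔ
  -- the two summands are at most `1 / s` and `(s - 1) / s`
  rw [blockDecrease,
    show ωminus * (2 - αplus) * αminus ^ 2 / ((s : ℝ) * αplus) * (δ / (κ * Δ)) ^ 2 *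
      (κ ^ 2 * ((s - 1) / ((2 - αplus) / αplus) +
        (Δ / δ) ^ 2 / (αminus * (2 - αplus) * ωminus)))
      = (αminus / αplus + (s - 1) * (ωminus * αminus ^ 2 * (δ / Δ) ^ 2)) / s by
    field_simp; ring]
  rw [div_le_one (by positivity)]
  have h1 : αminus / αplus ≤ 1 := div_le_one_of_le₀ (by linarith) (by linarith)
  have h2 : ωminus * αminus ^ 2 * (δ / Δ) ^ 2 ≤ 1 :=
    mul_le_one₀ (mul_le_one₀ hωm₁ (by positivity) (by nlinarith)) (by positivity)
      (pow_le_one₀ (by positivity) (div_le_one_of_le₀ hδΔ hΔ.le))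
  nlinarith

end BlockDecrease

section DoubleLayer

variable {ι H : Type*} [NormedAddCommGroup H] [InnerProductSpace ℝ H]

structure IsDoubleLayerIteration (U : ι → H → H) (I : ℕ → Finset ι) (ω : ℕ → ι → ℝ)
    (α : ℕ → ℝ) (x : ℕ → H) (αminus αplus ωminus : ℝ) : Prop where
  cutter : ∀ i, IsCutter (U i)
  αminus_mem : αminus ∈ Set.Ioc (0 : ℝ) 1
  αplus_mem : αplus ∈ Set.Ico (1 : ℝ) 2
  ωminus_mem : ωminus ∈ Set.Ioc (0 : ℝ) 1
  α_mem : ∀ k, α k ∈ Set.Icc αminus αplus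
  ω_mem : ∀ k, ∀ i ∈ I k, ω k i ∈ Set.Icc ωminus 1
  sum_ω : ∀ k, ∑ i ∈ I k, ω k i = 1
  succ_eq : ∀ k, x (k + 1) = relaxedAverage U (I k) (ω k) (α k) (x k)

namespace IsDoubleLayerIteration

variable {U : ι → H → H} {I : ℕ → Finset ι} {ω : ℕ → ι → ℝ} {α : ℕ → ℝ} {x : ℕ → H}
  {αminus αplus ωminus : ℝ}

theorem α_pos (hA : IsDoubleLayerIteration U I ω α x αminus αplus ωminus) (k : ℕ) : 0 < α k :=
  hA.αminus_mem.1.trans_le (hA.α_mem k).1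

theorem ω_nonneg (hA : IsDoubleLayerIteration U I ω α x αminus αplus ωminus) {k : ℕ} {i : ι}
    (hi : i ∈ I k) : 0 ≤ ω k i :=
  hA.ωminus_mem.1.le.trans (hA.ω_mem k i hi).1

theorem relaxedAverageGain_nonneg
    (hA : IsDoubleLayerIteration U I ω α x αminus αplus ωminus) (k : ℕ) :
    0 ≤ relaxedAverageGain U (I k) (ω k) (α k) (x k) :=
  _root_.relaxedAverageGain_nonneg (fun _ => hA.ω_nonneg) (hA.α_pos k).le
    ((hA.α_mem k).2.trans hA.αplus_mem.2.le)

theorem sq_dist_succ_add_relaxedAverageGain_le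
    (hA : IsDoubleLayerIteration U I ω α x αminus αplus ωminus) :
    ∀ z ∈ ⋂ i, fixedPoints (U i), ∀ k,
      dist (x (k + 1)) z ^ 2 + relaxedAverageGain U (I k) (ω k) (α k) (x k) ≤ dist (x k) z ^ 2 :=
  fun _ hz k => hA.succ_eq k ▸ dist_relaxedAverage_sq_add_relaxedAverageGain_le
    (fun i _ => hA.cutter i) (hA.α_pos k).le (fun _ => hA.ω_nonneg) (hA.sum_ω k)
    fun i _ => Set.mem_iInter.1 hz i

theorem mul_sq_dist_succ_le_relaxedAverageGain
    (hA : IsDoubleLayerIteration U I ω α x αminus αplus ωminus) (k : ℕ) :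
    (2 - αplus) / αplus * dist (x k) (x (k + 1)) ^ 2 ≤
      relaxedAverageGain U (I k) (ω k) (α k) (x k) :=
  hA.succ_eq k ▸ mul_dist_relaxedAverage_sq_le_relaxedAverageGain (hA.α_pos k) (hA.α_mem k).2
    hA.αplus_mem.2.le (fun _ => hA.ω_nonneg) (hA.sum_ω k)

theorem mul_norm_sub_sq_le_relaxedAverageGain
    (hA : IsDoubleLayerIteration U I ω α x αminus αplus ωminus) {k : ℕ} {i : ι} (hi : i ∈ I k) :
    αminus * (2 - αplus) * ωminus * ‖U i (x k) - x k‖ ^ 2 ≤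
      relaxedAverageGain U (I k) (ω k) (α k) (x k) :=
  _root_.mul_norm_sub_sq_le_relaxedAverageGain hA.αminus_mem.1.le (hA.α_mem k) hA.αplus_mem.2.le
    hA.ωminus_mem.1.le (fun j hj => (hA.ω_mem k j hj).1) hi

theorem blockDecrease_mul_sq_infDist_le_sum_relaxedAverageGain [Fintype ι] [Nonempty ι]
    (hA : IsDoubleLayerIteration U I ω α x αminus αplus ωminus) {p : ι → H → ℝ}
    {J : ℕ → Finset ι} {s k : ℕ} {δ Δ κ : ℝ} (hs : 1 ≤ s) (hδ : 0 < δ) (hδΔ : δ ≤ Δ)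
    (hκ : 0 < κ) (hcover : ∀ i, ∃ l < s, i ∈ J (k + l))
    (hmax : ∀ t, ∃ i ∈ I t, ∀ j ∈ J t, p j (x t) ≤ p i (x t))
    (hbound : ∀ t, ∀ i, δ * infDist (x t) (fixedPoints (U i)) ≤ p i (x t) ∧
      p i (x t) ≤ Δ * ‖U i (x t) - x t‖)
    (hlinreg : infDist (x k) (⋂ i, fixedPoints (U i)) ≤
      κ * Finset.univ.sup' Finset.univ_nonempty fun i => infDist (x k) (fixedPoints (U i))) :
    blockDecrease αminus αplus ωminus δ Δ κ s * infDist (x k) (⋂ i, fixedPoints (U i)) ^ 2 ≤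
      ∑ t ∈ Finset.range s,
        relaxedAverageGain U (I (k + t)) (ω (k + t)) (α (k + t)) (x (k + t)) := by
  have h2αp : 0 < 2 - αplus := by linarith [hA.αplus_mem.2]
  have hblock := sq_infDist_iInter_le_mul_sum U p x I J _ hδ
    (div_pos h2αp (by linarith [hA.αplus_mem.1]))
    (mul_pos (mul_pos hA.αminus_mem.1 h2αp) hA.ωminus_mem.1) hA.relaxedAverageGain_nonneg
    hA.mul_sq_dist_succ_le_relaxedAverageGain (fun _ _ => hA.mul_norm_sub_sq_le_relaxedAverageGain)
    hcover hmax hbound hlinreg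
  refine (mul_le_mul_of_nonneg_left hblock
    (blockDecrease_nonneg hA.αplus_mem hA.ωminus_mem)).trans ?_
  rw [← mul_assoc]
  exact mul_le_of_le_one_left (Finset.sum_nonneg fun t _ => hA.relaxedAverageGain_nonneg _)
    (blockDecrease_mul_le_one hA.αminus_mem hA.αplus_mem hA.ωminus_mem hδ hδΔ hκ hs)

end IsDoubleLayerIteration

end DoubleLayer

theorem doubleLayer_error_bound_general
    {H : Type*} [NormedAddCommGroup H] [InnerProductSpace ℝ H]
    {m : ℕ} [NeZero m]
    (U : Fin m → H → H) (p : Fin m → H → ℝ)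
    (hcutter : ∀ i, ∀ x : H, ∀ z ∈ fixedPoints (U i), ⟪x - U i x, z - U i x⟫ ≤ 0)
    (hC : (⋂ i, fixedPoints (U i)).Nonempty)
    (x : ℕ → H) (Ik Jk : ℕ → Finset (Fin m)) (α : ℕ → ℝ) (ω : ℕ → Fin m → ℝ)
    (αminus αplus ωminus : ℝ)
    (hαminus : αminus ∈ Set.Ioc (0 : ℝ) 1) (hαplus : αplus ∈ Set.Ico (1 : ℝ) 2)
    (hωminus : ωminus ∈ Set.Ioc (0 : ℝ) 1)
    (hα : ∀ k, α k ∈ Set.Icc αminus αplus)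
    (hω : ∀ k, ∀ i ∈ Ik k, ω k i ∈ Set.Icc ωminus 1)
    (hωsum : ∀ k, ∑ i ∈ Ik k, ω k i = 1)
    (hrec : ∀ k, x (k + 1) = x k + α k • ((∑ i ∈ Ik k, ω k i • U i (x k)) - x k))
    (s : ℕ) (hs : 1 ≤ s)
    (hcover : ∀ k, ∀ i : Fin m, ∃ l < s, i ∈ Jk (k + l))
    (hiii : ∀ k, ∃ i ∈ Ik k, ∀ j ∈ Jk k, p j (x k) ≤ p i (x k))
    (hr : 0 < infDist (x 0) (⋂ i, fixedPoints (U i)))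
    (x0p : H) (hx0p : x0p ∈ ⋂ i, fixedPoints (U i))
    (hx0pproj : ‖x 0 - x0p‖ = infDist (x 0) (⋂ i, fixedPoints (U i)))
    (δ Δ : ℝ) (hδ : 0 < δ) (hΔ : 0 < Δ)
    (hbound : ∀ y ∈ closedBall x0p (infDist (x 0) (⋂ i, fixedPoints (U i))), ∀ i,
      δ * infDist y (fixedPoints (U i)) ≤ p i y ∧ p i y ≤ Δ * ‖U i y - y‖)
    (κ : ℝ) (hκ : 0 < κ)
    (hlinreg : ∀ y ∈ closedBall x0p (infDist (x 0) (⋂ i, fixedPoints (U i))),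
      infDist y (⋂ i, fixedPoints (U i)) ≤
        κ * Finset.univ.sup' Finset.univ_nonempty fun i =>
          infDist y (fixedPoints (U i)))
    (xinf : H)
    (hlim : Tendsto x atTop (nhds xinf)) :
    ∀ k : ℕ,
      δ / (2 * κ) * ‖x k - xinf‖ ≤
        (Finset.univ.sup' Finset.univ_nonempty fun i => p i (x k)) ∧
      (Finset.univ.sup' Finset.univ_nonempty fun i => p i (x k)) ≤
        Δ * (2 * infDist (x 0) (⋂ i, fixedPoints (U i)) /
            ((1 - ωminus * (2 - αplus) * αminus ^ 2 / ((s : ℝ) * αplus) *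
                (δ / (κ * Δ)) ^ 2) ^ ((1 : ℝ) / (2 * (s : ℝ)))) ^ (s - 1)) *
          ((1 - ωminus * (2 - αplus) * αminus ^ 2 / ((s : ℝ) * αplus) *
              (δ / (κ * Δ)) ^ 2) ^ ((1 : ℝ) / (2 * (s : ℝ)))) ^ k := by
  set C := ⋂ i, fixedPoints (U i)
  have hA : IsDoubleLayerIteration U Ik ω α x αminus αplus ωminus :=
    ⟨hcutter, hαminus, hαplus, hωminus, hα, hω, hωsum, hrec⟩
  have hfejer : ∀ z ∈ C, Antitone fun k => dist (x k) z := fun _ hz =>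
    antitone_dist_of_sq_dist_succ_add_le hA.relaxedAverageGain_nonneg
      hA.sq_dist_succ_add_relaxedAverageGain_le hz
  have hball : ∀ k, x k ∈ closedBall x0p (infDist (x 0) C) := fun k => by
    rw [mem_closedBall, ← hx0pproj, ← dist_eq_norm]
    exact hfejer x0p hx0p (Nat.zero_le k)
  have hκ₁ : 1 ≤ κ := one_le_of_infDist_iInter_le_mul_sup' hC hr (hlinreg _ (hball 0))
  have hδΔ : δ ≤ Δ := le_of_proximity_bounds hcutter hC hΔ.le hκ.le hr
    (hlinreg _ (hball 0)) (hbound _ (hball 0))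
  have hrate := le_div_mul_rpow_pow_of_le_sqrt_mul hs
    (antitone_infDist_of_antitone_dist hC hfejer) infDist_nonneg
    (blockDecrease_nonneg hαplus hωminus)
    (blockDecrease_le_inv hαminus hαplus hωminus hδ.le hδΔ hκ₁)
    (infDist_add_le_sqrt_one_sub_mul hC hA.sq_dist_succ_add_relaxedAverageGain_le fun k =>
      hA.blockDecrease_mul_sq_infDist_le_sum_relaxedAverageGain hs hδ hδΔ hκ (hcover k) hiii
        (fun t => hbound _ (hball t)) (hlinreg _ (hball k)))
  intro k
  refine ⟨?_, ?_⟩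
  · rw [← dist_eq_norm]
    exact div_two_mul_mul_dist_le_sup' hδ.le hκ (fun i => (hbound _ (hball k) i).1)
      (hlinreg _ (hball k)) (dist_le_two_mul_infDist_of_tendsto hC hfejer hlim k)
  · refine (sup'_le_mul_infDist_iInter hcutter hC hΔ.le fun i => (hbound _ (hball k) i).2).trans ?_
    rw [mul_assoc]
    gcongr
    rw [mul_div_assoc, mul_assoc]
    linarith [hrate k, infDist_nonneg (x := x k) (s := C)]

/-- Error bound for the double-layer fixed point algorithm under
the linear-convergence hypotheses: argmax control, two-sided proximity bounds and
bounded linear regularity of the family of fixed point sets. -/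
theorem doubleLayer_error_bound
    {H : Type*} [NormedAddCommGroup H] [InnerProductSpace ℝ H] [CompleteSpace H]
    {m : ℕ} [NeZero m]
    (U : Fin m → H → H) (p : Fin m → H → ℝ)
    (hcutter : ∀ i, ∀ x : H, ∀ z ∈ fixedPoints (U i), ⟪x - U i x, z - U i x⟫ ≤ 0)
    (hpnonneg : ∀ i, ∀ x : H, 0 ≤ p i x)
    (hpfix : ∀ i, fixedPoints (U i) = {x : H | p i x = 0})
    (hC : (⋂ i, fixedPoints (U i)).Nonempty)
    (x : ℕ → H) (Ik Jk : ℕ → Finset (Fin m)) (α : ℕ → ℝ) (ω : ℕ → Fin m → ℝ)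
    (hIkne : ∀ k, (Ik k).Nonempty) (hIJ : ∀ k, Ik k ⊆ Jk k)
    (αminus αplus ωminus : ℝ)
    (hαminus : αminus ∈ Set.Ioc (0 : ℝ) 1) (hαplus : αplus ∈ Set.Ico (1 : ℝ) 2)
    (hωminus : ωminus ∈ Set.Ioc (0 : ℝ) 1)
    (hα : ∀ k, α k ∈ Set.Icc αminus αplus)
    (hω : ∀ k, ∀ i ∈ Ik k, ω k i ∈ Set.Icc ωminus 1)
    (hωsum : ∀ k, ∑ i ∈ Ik k, ω k i = 1)
    (hrec : ∀ k, x (k + 1) = x k + α k • ((∑ i ∈ Ik k, ω k i • U i (x k)) - x k))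
    (s : ℕ) (hs : 1 ≤ s)
    (hcover : ∀ k, ∀ i : Fin m, ∃ l < s, i ∈ Jk (k + l))
    (hiii : ∀ k, ∃ i ∈ Ik k, ∀ j ∈ Jk k, p j (x k) ≤ p i (x k))
    (hr : 0 < infDist (x 0) (⋂ i, fixedPoints (U i)))
    (x0p : H) (hx0p : x0p ∈ ⋂ i, fixedPoints (U i))
    (hx0pproj : ‖x 0 - x0p‖ = infDist (x 0) (⋂ i, fixedPoints (U i)))
    (δ Δ : ℝ) (hδ : 0 < δ) (hΔ : 0 < Δ)
    (hbound : ∀ y ∈ closedBall x0p (infDist (x 0) (⋂ i, fixedPoints (U i))), ∀ i,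
      δ * infDist y (fixedPoints (U i)) ≤ p i y ∧ p i y ≤ Δ * ‖U i y - y‖)
    (κ : ℝ) (hκ : 0 < κ)
    (hlinreg : ∀ y ∈ closedBall x0p (infDist (x 0) (⋂ i, fixedPoints (U i))),
      infDist y (⋂ i, fixedPoints (U i)) ≤
        κ * Finset.univ.sup' Finset.univ_nonempty fun i =>
          infDist y (fixedPoints (U i)))
    (xinf : H) (hxinf : xinf ∈ ⋂ i, fixedPoints (U i))
    (hlim : Tendsto x atTop (nhds xinf)) :
    ∀ k : ℕ,
      δ / (2 * κ) * ‖x k - xinf‖ ≤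
        (Finset.univ.sup' Finset.univ_nonempty fun i => p i (x k)) ∧
      (Finset.univ.sup' Finset.univ_nonempty fun i => p i (x k)) ≤
        Δ * (2 * infDist (x 0) (⋂ i, fixedPoints (U i)) /
            ((1 - ωminus * (2 - αplus) * αminus ^ 2 / ((s : ℝ) * αplus) *
                (δ / (κ * Δ)) ^ 2) ^ ((1 : ℝ) / (2 * (s : ℝ)))) ^ (s - 1)) *
          ((1 - ωminus * (2 - αplus) * αminus ^ 2 / ((s : ℝ) * αplus) *
              (δ / (κ * Δ)) ^ 2) ^ ((1 : ℝ) / (2 * (s : ℝ)))) ^ k :=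
  doubleLayer_error_bound_general U p hcutter hC x Ik Jk α ω αminus αplus ωminus hαminus hαplus
    hωminus hα hω hωsum hrec s hs hcover hiii hr x0p hx0p hx0pproj δ Δ hδ hΔ hbound κ hκ hlinreg
    xinf hlim
end

section
/- Let C_i ⊆ H, i ∈ I = {1,…,m}, be closed convex sets with C := ⋂_{i∈I} C_i ≠ ∅, and let {x^k} be generated by the double-layer projection algorithm x^{k+1} := x^k + α_k(Σ_{i∈I_k} ω_i^k P_{C_i} x^k − x^k) under conditions (i) and (ii), and assume (iii): if lim_{k→∞} max_{i∈I_k} d(x^k, C_i) = 0 then lim_{k→∞} max_{j∈J_k} d(x^k, C_j) = 0. Then {x^k} converges weakly to some point x^∞ ∈ C. Moreover, if the family {C_i : i ∈ I} is boundedly regular, then the convergence to x^∞ is in norm. -/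
/-!
The iteration is Fejér monotone with respect to `C = ⋂ i, C i`: for `z ∈ C`,
`‖x (k+1) - z‖² + α⁻ (2 - α⁺) ∑_{i ∈ I k} ω k i · d(x k, C i)² ≤ ‖x k - z‖²`,
because every projection step satisfies `‖P y - z‖² + ‖y - P y‖² ≤ ‖y - z‖²` and the weighted
average is controlled by convexity of `‖·‖²`. Telescoping makes the weighted residuals tend to
zero; hence `max_{i ∈ I k} d(x k, C i) → 0` and `‖x (k+1) - x k‖ → 0`. Condition (iii) transfers
the first limit to the sets `J k`, and since every index lies in some `J (k + l)` with `l < s`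
while the iterates move less and less, `d(x k, C i) → 0` for every `i`. So every weak cluster
point lies in `C`, and Opial's argument gives weak convergence: the sequence is bounded, hence has
weak cluster points, and two of them `p, q ∈ C` coincide because `⟪x k, p - q⟫` converges
(polarize the convergent `‖x k - p‖²` and `‖x k - q‖²`). Under bounded regularity
`d(x k, C) → 0`, and a Fejér monotone sequence with this property is Cauchy.
-/

open Filter Metric Bornology Topology RealInnerProductSpace

section PseudoMetricSpace

variable {X : Type*} [PseudoMetricSpace X]

def IsFejerMonotone (C : Set X) (x : ℕ → X) : Prop :=
  ∀ z ∈ C, Antitone fun k => dist (x k) z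

namespace IsFejerMonotone

variable {C : Set X} {x : ℕ → X}

theorem isBounded_range (hx : IsFejerMonotone C x) (hC : C.Nonempty) :
    IsBounded (Set.range x) := by
  obtain ⟨z, hz⟩ := hC
  refine (isBounded_closedBall (x := z) (r := dist (x 0) z)).subset ?_
  rintro _ ⟨k, rfl⟩
  exact hx z hz (Nat.zero_le k)

theorem exists_tendsto_dist (hx : IsFejerMonotone C x) {z : X} (hz : z ∈ C) :
    ∃ L, Tendsto (fun k => dist (x k) z) atTop (𝓝 L) :=
  ⟨_, tendsto_atTop_ciInf (hx z hz) ⟨0, by rintro _ ⟨k, rfl⟩; exact dist_nonneg⟩⟩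

theorem cauchySeq (hx : IsFejerMonotone C x) (hC : C.Nonempty)
    (hd : Tendsto (fun k => infDist (x k) C) atTop (𝓝 0)) : CauchySeq x := by
  refine Metric.cauchySeq_iff'.2 fun ε hε => ?_
  obtain ⟨N, hN⟩ := (hd.eventually (gt_mem_nhds (half_pos hε))).exists
  obtain ⟨z, hz, hNz⟩ := (infDist_lt_iff hC).1 hN
  refine ⟨N, fun n hn => ?_⟩
  calc dist (x n) (x N) ≤ dist (x n) z + dist (x N) z := dist_triangle_right _ _ _
    _ ≤ dist (x N) z + dist (x N) z := by gcongr; exact hx z hz hn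
    _ < ε := by linarith

end IsFejerMonotone

theorem tendsto_infDist_of_tendsto_dist_succ_of_visits {u : ℕ → X} {K : Set X} {e : ℕ → ℝ}
    {s : ℕ} (he : Tendsto e atTop (𝓝 0))
    (hu : Tendsto (fun k => dist (u k) (u (k + 1))) atTop (𝓝 0))
    (hvisit : ∀ k, ∃ l < s, infDist (u (k + l)) K ≤ e (k + l)) :
    Tendsto (fun k => infDist (u k) K) atTop (𝓝 0) := by
  set g : ℕ → ℝ := fun k =>
    ∑ l ∈ Finset.range s, (|e (k + l)| + dist (u (k + l)) (u (k + l + 1)))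
  have hg : Tendsto g atTop (𝓝 0) := by
    simpa using tendsto_finsetSum (Finset.range s) fun l _ =>
      ((he.comp (tendsto_add_atTop_nat l)).abs.add (hu.comp (tendsto_add_atTop_nat l)))
  refine squeeze_zero (fun k => infDist_nonneg) (fun k => ?_) hg
  obtain ⟨l, hls, hl⟩ := hvisit k
  have hmove : dist (u k) (u (k + l)) ≤ ∑ j ∈ Finset.range l, dist (u (k + j)) (u (k + j + 1)) :=
    dist_le_range_sum_dist (fun j => u (k + j)) l
  have hsub : Finset.range l ⊆ Finset.range s := Finset.range_subset_range.2 hls.le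
  calc infDist (u k) K ≤ infDist (u (k + l)) K + dist (u k) (u (k + l)) :=
        infDist_le_infDist_add_dist
    _ ≤ |e (k + l)| + ∑ j ∈ Finset.range s, dist (u (k + j)) (u (k + j + 1)) := by
        gcongr
        · exact hl.trans (le_abs_self _)
        · exact hmove.trans (Finset.sum_le_sum_of_subset_of_nonneg hsub fun _ _ _ => dist_nonneg)
    _ ≤ g k := by
        simp only [g, Finset.sum_add_distrib]
        gcongr
        exact Finset.single_le_sum (f := fun l => |e (k + l)|) (fun _ _ => abs_nonneg _)
          (Finset.mem_range.2 hls)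

end PseudoMetricSpace

theorem IsFejerMonotone.of_sq_norm_sub_add_le {E : Type*} [SeminormedAddCommGroup E]
    {C : Set E} {x : ℕ → E} {b : ℕ → ℝ} (hb : ∀ k, 0 ≤ b k)
    (h : ∀ z ∈ C, ∀ k, ‖x (k + 1) - z‖ ^ 2 + b k ≤ ‖x k - z‖ ^ 2) : IsFejerMonotone C x :=
  fun z hz => antitone_nat_of_succ_le fun k => by
    simp only [dist_eq_norm]
    exact (pow_le_pow_iff_left₀ (norm_nonneg _) (norm_nonneg _) two_ne_zero).1
      (by linarith [h z hz k, hb k])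

theorem tendsto_zero_of_add_mul_le {a b : ℕ → ℝ} {c : ℝ} (hc : 0 < c) (ha : ∀ k, 0 ≤ a k)
    (hb : ∀ k, 0 ≤ b k) (hab : ∀ k, a (k + 1) + c * b k ≤ a k) :
    Tendsto b atTop (𝓝 0) := by
  have hanti : Antitone a := antitone_nat_of_succ_le fun k => by nlinarith [hab k, hb k]
  obtain ⟨L, hL⟩ : ∃ L, Tendsto a atTop (𝓝 L) :=
    ⟨_, tendsto_atTop_ciInf hanti ⟨0, by rintro _ ⟨k, rfl⟩; exact ha k⟩⟩
  have hdiff : Tendsto (fun k => (a k - a (k + 1)) / c) atTop (𝓝 0) := by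
    simpa using (hL.sub (hL.comp (tendsto_add_atTop_nat 1))).div_const c
  refine squeeze_zero hb (fun k => ?_) hdiff
  rw [le_div_iff₀ hc]
  linarith [hab k]

theorem tendsto_sup'_of_tendsto_sum_mul_sq {ι : Type*} {I : ℕ → Finset ι}
    (hI : ∀ k, (I k).Nonempty) {f : ℕ → ι → ℝ} (hf : ∀ k i, 0 ≤ f k i) {ω : ℕ → ι → ℝ}
    {ωmin : ℝ} (hωmin : 0 < ωmin) (hω : ∀ k, ∀ i ∈ I k, ωmin ≤ ω k i)
    (h : Tendsto (fun k => ∑ i ∈ I k, ω k i * f k i ^ 2) atTop (𝓝 0)) :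
    Tendsto (fun k => (I k).sup' (hI k) (f k)) atTop (𝓝 0) := by
  have hbound : ∀ k, (I k).sup' (hI k) (f k) ≤ √((∑ i ∈ I k, ω k i * f k i ^ 2) / ωmin) :=
    fun k => Finset.sup'_le _ _ fun i hi => by
      have hω0 : ∀ j ∈ I k, 0 ≤ ω k j * f k j ^ 2 := fun j hj =>
        mul_nonneg (hωmin.le.trans (hω k j hj)) (sq_nonneg _)
      refine Real.le_sqrt_of_sq_le ((le_div_iff₀ hωmin).2 ?_)
      nlinarith [Finset.single_le_sum hω0 hi, hω k i hi, sq_nonneg (f k i)]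
  refine squeeze_zero (fun k => ?_) hbound (by simpa using (h.div_const ωmin).sqrt)
  obtain ⟨i, hi⟩ := hI k
  exact (hf k i).trans (Finset.le_sup' _ hi)

section Hilbert

variable {H : Type*} [NormedAddCommGroup H] [InnerProductSpace ℝ H]

def WeakTendsto (u : ℕ → H) (p : H) : Prop :=
  ∀ w, Tendsto (fun k => ⟪u k, w⟫) atTop (𝓝 ⟪p, w⟫)

theorem Filter.Tendsto.weakTendsto {u : ℕ → H} {p : H} (h : Tendsto u atTop (𝓝 p)) :
    WeakTendsto u p :=
  fun _ => h.inner tendsto_const_nhds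

namespace WeakTendsto

variable {u v : ℕ → H} {p q : H}

theorem unique (hp : WeakTendsto u p) (hq : WeakTendsto u q) : p = q := by
  have := tendsto_nhds_unique (hp (p - q)) (hq (p - q))
  rw [← sub_eq_zero, ← inner_self_eq_zero (𝕜 := ℝ), inner_sub_left, this, sub_self]

theorem of_tendsto_norm_sub (h : WeakTendsto u p)
    (huv : Tendsto (fun k => ‖u k - v k‖) atTop (𝓝 0)) : WeakTendsto v p := by
  intro w
  have hzero : Tendsto (fun k => ⟪u k - v k, w⟫) atTop (𝓝 0) := by
    simpa using (tendsto_zero_iff_norm_tendsto_zero.2 huv).inner tendsto_const_nhds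
  simpa [inner_sub_left] using (h w).sub hzero

theorem mem_of_forall_mem [CompleteSpace H] {K : Set H} (hKc : IsClosed K) (hK : Convex ℝ K)
    (hu : ∀ k, u k ∈ K) (h : WeakTendsto u p) : p ∈ K := by
  obtain ⟨q, hqK, hq⟩ :=
    exists_norm_eq_iInf_of_complete_convex ⟨u 0, hu 0⟩ hKc.isComplete hK p
  have hvar := (norm_eq_iInf_iff_real_inner_le_zero hK hqK).1 hq
  have hlim : Tendsto (fun k => ⟪u k - q, p - q⟫) atTop (𝓝 ⟪p - q, p - q⟫) := by
    simpa only [← inner_sub_left] using (h (p - q)).sub_const ⟪q, p - q⟫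
  have hpq : ⟪p - q, p - q⟫ ≤ 0 :=
    le_of_tendsto' hlim fun k => by rw [real_inner_comm]; exact hvar _ (hu k)
  rw [real_inner_self_nonpos, sub_eq_zero] at hpq
  exact hpq ▸ hqK

theorem mem_of_tendsto_infDist [CompleteSpace H] {K : Set H} (hKc : IsClosed K)
    (hK : Convex ℝ K) (hne : K.Nonempty) (h : WeakTendsto u p)
    (hd : Tendsto (fun k => infDist (u k) K) atTop (𝓝 0)) : p ∈ K := by
  have hnear : ∀ k, ∃ v ∈ K, ‖u k - v‖ = infDist (u k) K := fun k => by
    obtain ⟨v, hvK, hv⟩ := exists_norm_eq_iInf_of_complete_convex hne hKc.isComplete hK (u k)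
    exact ⟨v, hvK, by simpa only [infDist_eq_iInf, dist_eq_norm] using hv⟩
  choose v hvK hv using hnear
  exact (h.of_tendsto_norm_sub (v := v) (by simpa only [hv] using hd)).mem_of_forall_mem hKc hK hvK

end WeakTendsto

theorem exists_strictMono_weakTendsto [CompleteSpace H] {u : ℕ → H}
    (hu : IsBounded (Set.range u)) :
    ∃ φ : ℕ → ℕ, StrictMono φ ∧ ∃ p, WeakTendsto (u ∘ φ) p := by
  set K := (Submodule.span ℝ (Set.range u)).topologicalClosure
  have : TopologicalSpace.SeparableSpace K :=
    ((Set.countable_range u).isSeparable.span.closure).separableSpace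
  have huK : ∀ k, u k ∈ K := fun k =>
    Submodule.le_topologicalClosure _ (Submodule.subset_span ⟨k, rfl⟩)
  obtain ⟨M, hM⟩ := hu.exists_norm_le
  let f : ℕ → WeakDual ℝ K := fun k => InnerProductSpace.toDual ℝ K ⟨u k, huK k⟩
  have hf : ∀ k, f k ∈ WeakDual.toStrongDual ⁻¹' closedBall 0 M := fun k =>
    mem_closedBall_zero_iff.2
      (((InnerProductSpace.toDual ℝ K).norm_map _).trans_le (hM _ ⟨k, rfl⟩))
  obtain ⟨g, -, φ, hφ, hlim⟩ := WeakDual.isSeqCompact_closedBall ℝ K 0 M hf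
  set p : K := (InnerProductSpace.toDual ℝ K).symm (WeakDual.toStrongDual g)
  refine ⟨φ, hφ, p, fun w => ?_⟩
  -- testing against `w` is testing against its projection onto `K`, which contains `u` and `p`
  have hp : ⟪(p : H), w⟫ = g (K.orthogonalProjectionOnto w) := by
    rw [← Submodule.inner_orthogonalProjectionOnto_eq_of_mem_left,
      InnerProductSpace.toDual_symm_apply]
    rfl
  rw [hp]
  refine (((WeakDual.eval_continuous _).tendsto g).comp hlim).congr fun k => ?_
  exact Submodule.inner_orthogonalProjectionOnto_eq_of_mem_left (⟨u (φ k), huK _⟩ : K) w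

namespace IsFejerMonotone

variable {C : Set H} {x : ℕ → H}

theorem exists_tendsto_inner_sub (hx : IsFejerMonotone C x) {p q : H} (hp : p ∈ C)
    (hq : q ∈ C) : ∃ t, Tendsto (fun k => ⟪x k, p - q⟫) atTop (𝓝 t) := by
  obtain ⟨a, ha⟩ := hx.exists_tendsto_dist hp
  obtain ⟨b, hb⟩ := hx.exists_tendsto_dist hq
  refine ⟨_, ((((hb.pow 2).sub (ha.pow 2)).add_const (‖p‖ ^ 2 - ‖q‖ ^ 2)).div_const 2).congr
    fun k => ?_⟩
  simp only [dist_eq_norm, norm_sub_sq_real, inner_sub_right]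
  ring

theorem exists_weakTendsto [CompleteSpace H] (hx : IsFejerMonotone C x) (hC : C.Nonempty)
    (hcl : ∀ φ : ℕ → ℕ, Tendsto φ atTop atTop → ∀ p, WeakTendsto (x ∘ φ) p → p ∈ C) :
    ∃ p ∈ C, WeakTendsto x p := by
  have hbdd := hx.isBounded_range hC
  have huniq : ∀ φ ψ : ℕ → ℕ, Tendsto φ atTop atTop → Tendsto ψ atTop atTop →
      ∀ p q, WeakTendsto (x ∘ φ) p → WeakTendsto (x ∘ ψ) q → p = q := by
    intro φ ψ hφ hψ p q hp hq
    obtain ⟨t, ht⟩ := hx.exists_tendsto_inner_sub (hcl φ hφ p hp) (hcl ψ hψ q hq)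
    have htp : ⟪p, p - q⟫ = t := tendsto_nhds_unique (hp _) (ht.comp hφ)
    have htq : ⟪q, p - q⟫ = t := tendsto_nhds_unique (hq _) (ht.comp hψ)
    rw [← sub_eq_zero, ← inner_self_eq_zero (𝕜 := ℝ), inner_sub_left, htp, htq, sub_self]
  obtain ⟨φ, hφ, p, hp⟩ := exists_strictMono_weakTendsto hbdd
  refine ⟨p, hcl φ hφ.tendsto_atTop p hp, fun w => tendsto_of_subseq_tendsto fun ns hns => ?_⟩
  obtain ⟨ψ, hψ, q, hq⟩ :=
    exists_strictMono_weakTendsto (hbdd.subset (Set.range_comp_subset_range ns x))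
  refine ⟨ψ, ?_⟩
  rw [huniq φ (ns ∘ ψ) hφ.tendsto_atTop (hns.comp hψ.tendsto_atTop) p q hp hq]
  exact hq w

end IsFejerMonotone

theorem sq_norm_sub_add_sq_norm_sub_le {K : Set H} (hK : Convex ℝ K) {y p z : H} (hp : p ∈ K)
    (hd : ‖y - p‖ = infDist y K) (hz : z ∈ K) :
    ‖p - z‖ ^ 2 + ‖y - p‖ ^ 2 ≤ ‖y - z‖ ^ 2 := by
  simp only [infDist_eq_iInf, dist_eq_norm] at hd
  have hvar := (norm_eq_iInf_iff_real_inner_le_zero hK hp).1 hd z hz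
  have hsplit : y - z = (y - p) + (p - z) := by abel
  rw [hsplit, norm_add_sq_real, ← neg_sub z p, inner_neg_right]
  nlinarith

theorem sq_norm_sum_smul_le {ι : Type*} {s : Finset ι} {w : ι → ℝ} (v : ι → H)
    (hw : ∀ i ∈ s, 0 ≤ w i) (hw1 : ∑ i ∈ s, w i = 1) :
    ‖∑ i ∈ s, w i • v i‖ ^ 2 ≤ ∑ i ∈ s, w i * ‖v i‖ ^ 2 :=
  (convexOn_univ_norm.pow (fun _ _ => norm_nonneg _) 2).map_sum_le hw hw1
    fun _ _ => Set.mem_univ _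

theorem sq_norm_sub_sum_smul_le {ι : Type*} {s : Finset ι} {w : ι → ℝ} (hw : ∀ i ∈ s, 0 ≤ w i)
    (hw1 : ∑ i ∈ s, w i = 1) (y : H) (p : ι → H) :
    ‖y - ∑ i ∈ s, w i • p i‖ ^ 2 ≤ ∑ i ∈ s, w i * ‖y - p i‖ ^ 2 := by
  have hsum : y - ∑ i ∈ s, w i • p i = ∑ i ∈ s, w i • (y - p i) := by
    simp only [smul_sub, Finset.sum_sub_distrib, ← Finset.sum_smul, hw1, one_smul]
  rw [hsum]
  exact sq_norm_sum_smul_le _ hw hw1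

theorem sq_norm_sum_smul_sub_le {ι : Type*} {s : Finset ι} {w : ι → ℝ} {K : ι → Set H}
    {p : ι → H} {y z : H} (hw : ∀ i ∈ s, 0 ≤ w i) (hw1 : ∑ i ∈ s, w i = 1)
    (hK : ∀ i ∈ s, Convex ℝ (K i)) (hp : ∀ i ∈ s, p i ∈ K i)
    (hd : ∀ i ∈ s, ‖y - p i‖ = infDist y (K i)) (hz : ∀ i ∈ s, z ∈ K i) :
    ‖∑ i ∈ s, w i • p i - z‖ ^ 2 ≤ ‖y - z‖ ^ 2 - ∑ i ∈ s, w i * ‖y - p i‖ ^ 2 := by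
  have hsum : ∑ i ∈ s, w i • p i - z = ∑ i ∈ s, w i • (p i - z) := by
    simp only [smul_sub, Finset.sum_sub_distrib, ← Finset.sum_smul, hw1, one_smul]
  calc ‖∑ i ∈ s, w i • p i - z‖ ^ 2 ≤ ∑ i ∈ s, w i * ‖p i - z‖ ^ 2 := by
        rw [hsum]; exact sq_norm_sum_smul_le _ hw hw1
    _ ≤ ∑ i ∈ s, w i * (‖y - z‖ ^ 2 - ‖y - p i‖ ^ 2) := by
        refine Finset.sum_le_sum fun i hi => mul_le_mul_of_nonneg_left ?_ (hw i hi)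
        linarith [sq_norm_sub_add_sq_norm_sub_le (hK i hi) (hp i hi) (hd i hi) (hz i hi)]
    _ = ‖y - z‖ ^ 2 - ∑ i ∈ s, w i * ‖y - p i‖ ^ 2 := by
        simp only [mul_sub, Finset.sum_sub_distrib, ← Finset.sum_mul, hw1, one_mul]

theorem sq_norm_add_smul_sub_sub_add_le {y T z : H} {α S : ℝ} (hα : 0 ≤ α)
    (hT : ‖T - z‖ ^ 2 ≤ ‖y - z‖ ^ 2 - S) (hS : ‖y - T‖ ^ 2 ≤ S) :
    ‖y + α • (T - y) - z‖ ^ 2 + α * min 1 (2 - α) * S ≤ ‖y - z‖ ^ 2 := by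
  rw [show y + α • (T - y) - z = (y - z) + α • (T - y) by abel, norm_add_sq_real, norm_smul,
    real_inner_smul_right, Real.norm_of_nonneg hα]
  rw [show T - z = (y - z) + (T - y) by abel, norm_add_sq_real] at hT
  rw [norm_sub_rev] at hS
  -- the cross term `α (α - 1) ‖T - y‖²` is `≤ 0` if `α ≤ 1`, and `≤ α (α - 1) S` otherwise
  rcases le_total α 1 with h | h
  · rw [min_eq_left (by linarith)]
    nlinarith [mul_nonneg hα (sub_nonneg.2 h), sq_nonneg ‖T - y‖]
  · rw [min_eq_right (by linarith)]
    nlinarith [mul_nonneg hα (sub_nonneg.2 h)]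

end Hilbert

section DoubleLayer

variable {H : Type*} [NormedAddCommGroup H] [InnerProductSpace ℝ H]
  {ι : Type*} {K : ι → Set H} {P : ι → H → H} {x : ℕ → H} {I : ℕ → Finset ι}
  {α : ℕ → ℝ} {ω : ℕ → ι → ℝ}

theorem doubleLayer_sq_norm_sub_add_le (hK : ∀ i, Convex ℝ (K i))
    (hP : ∀ i y, P i y ∈ K i ∧ ‖y - P i y‖ = infDist y (K i)) {αminus αplus : ℝ}
    (hαminus : 0 < αminus) (hαplus : αplus ∈ Set.Icc 1 2)
    (hα : ∀ k, α k ∈ Set.Icc αminus αplus) (hω : ∀ k, ∀ i ∈ I k, 0 ≤ ω k i)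
    (hωsum : ∀ k, ∑ i ∈ I k, ω k i = 1)
    (hrec : ∀ k, x (k + 1) = x k + α k • ((∑ i ∈ I k, ω k i • P i (x k)) - x k))
    {z : H} (hz : z ∈ ⋂ i, K i) (k : ℕ) :
    ‖x (k + 1) - z‖ ^ 2 + αminus * (2 - αplus) * ∑ i ∈ I k, ω k i * infDist (x k) (K i) ^ 2 ≤
      ‖x k - z‖ ^ 2 := by
  obtain ⟨hαk₁, hαk₂⟩ := hα k
  have hd : ∀ i y, ‖y - P i y‖ = infDist y (K i) := fun i y => (hP i y).2
  have hstep := sq_norm_add_smul_sub_sub_add_le (hαminus.le.trans hαk₁)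
    (sq_norm_sum_smul_sub_le (hω k) (hωsum k) (fun i _ => hK i) (fun i _ => (hP i _).1)
      (fun i _ => hd i _) fun i _ => Set.mem_iInter.1 hz i)
    (sq_norm_sub_sum_smul_le (hω k) (hωsum k) (x k) fun i => P i (x k))
  simp only [hd] at hstep
  rw [hrec]
  refine le_trans (add_le_add_right (mul_le_mul_of_nonneg_right ?_
    (Finset.sum_nonneg fun i hi => mul_nonneg (hω k i hi) (sq_nonneg _))) _) hstep
  exact mul_le_mul hαk₁ (le_min (by linarith [hαplus.1]) (by linarith))
    (by linarith [hαplus.2]) (by linarith)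

theorem doubleLayer_tendsto_dist_succ (hP : ∀ i y, ‖y - P i y‖ = infDist y (K i))
    (hα : ∀ k, α k ∈ Set.Icc 0 2) (hω : ∀ k, ∀ i ∈ I k, 0 ≤ ω k i)
    (hωsum : ∀ k, ∑ i ∈ I k, ω k i = 1)
    (hrec : ∀ k, x (k + 1) = x k + α k • ((∑ i ∈ I k, ω k i • P i (x k)) - x k))
    (hR : Tendsto (fun k => ∑ i ∈ I k, ω k i * infDist (x k) (K i) ^ 2) atTop (𝓝 0)) :
    Tendsto (fun k => dist (x k) (x (k + 1))) atTop (𝓝 0) := by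
  have hsq : ∀ k, dist (x k) (x (k + 1)) ^ 2 ≤
      4 * ∑ i ∈ I k, ω k i * infDist (x k) (K i) ^ 2 := fun k => by
    have hJensen := sq_norm_sub_sum_smul_le (hω k) (hωsum k) (x k) fun i => P i (x k)
    simp only [hP] at hJensen
    rw [dist_comm, dist_eq_norm, hrec, add_sub_cancel_left, norm_smul, mul_pow,
      Real.norm_eq_abs, sq_abs, ← norm_neg, neg_sub]
    have hα2 : α k ^ 2 ≤ 4 := by nlinarith [(hα k).1, (hα k).2]
    nlinarith [sq_nonneg ‖x k - ∑ i ∈ I k, ω k i • P i (x k)‖]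
  have := (squeeze_zero (fun _ => sq_nonneg _) hsq (by simpa using hR.const_mul 4)).sqrt
  simpa [Real.sqrt_sq dist_nonneg] using this

end DoubleLayer

theorem doubleLayer_projection_convergence_general
    {H : Type*} [NormedAddCommGroup H] [InnerProductSpace ℝ H] [CompleteSpace H]
    {m : ℕ} [NeZero m]
    (Cs : Fin m → Set H)
    (hCscl : ∀ i, IsClosed (Cs i)) (hCscv : ∀ i, Convex ℝ (Cs i))
    (hC : (⋂ i, Cs i).Nonempty)
    (P : Fin m → H → H)
    (hP : ∀ i, ∀ y : H, P i y ∈ Cs i ∧ ‖y - P i y‖ = infDist y (Cs i))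
    (x : ℕ → H) (Ik Jk : ℕ → Finset (Fin m)) (α : ℕ → ℝ) (ω : ℕ → Fin m → ℝ)
    (hIkne : ∀ k, (Ik k).Nonempty) (hIJ : ∀ k, Ik k ⊆ Jk k)
    (αminus αplus ωminus : ℝ)
    (hαminus : αminus ∈ Set.Ioc (0 : ℝ) 1) (hαplus : αplus ∈ Set.Ico (1 : ℝ) 2)
    (hωminus : ωminus ∈ Set.Ioc (0 : ℝ) 1)
    (hα : ∀ k, α k ∈ Set.Icc αminus αplus)
    (hω : ∀ k, ∀ i ∈ Ik k, ω k i ∈ Set.Icc ωminus 1)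
    (hωsum : ∀ k, ∑ i ∈ Ik k, ω k i = 1)
    (hrec : ∀ k, x (k + 1) = x k + α k • ((∑ i ∈ Ik k, ω k i • P i (x k)) - x k))
    (s : ℕ)
    (hcover : ∀ k, ∀ i : Fin m, ∃ l < s, i ∈ Jk (k + l))
    (hiii : Tendsto (fun k => (Ik k).sup' (hIkne k) fun i => infDist (x k) (Cs i))
        atTop (nhds 0) →
      Tendsto (fun k => (Jk k).sup' ((hIkne k).mono (hIJ k)) fun i =>
        infDist (x k) (Cs i)) atTop (nhds 0)) :
    ∃ xinf ∈ ⋂ i, Cs i,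
      (∀ w : H, Tendsto (fun k => ⟪x k, w⟫) atTop (nhds ⟪xinf, w⟫)) ∧
      ((∀ y : ℕ → H, IsBounded (Set.range y) →
        Tendsto (fun k => Finset.univ.sup' Finset.univ_nonempty fun i =>
          infDist (y k) (Cs i)) atTop (nhds 0) →
        Tendsto (fun k => infDist (y k) (⋂ i, Cs i)) atTop (nhds 0)) →
        Tendsto x atTop (nhds xinf)) := by
  have hω0 : ∀ k, ∀ i ∈ Ik k, 0 ≤ ω k i := fun k i hi => hωminus.1.le.trans (hω k i hi).1
  set R : ℕ → ℝ := fun k => ∑ i ∈ Ik k, ω k i * infDist (x k) (Cs i) ^ 2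
  have hR0 : ∀ k, 0 ≤ R k := fun k =>
    Finset.sum_nonneg fun i hi => mul_nonneg (hω0 k i hi) (sq_nonneg _)
  have hdecr := fun z (hz : z ∈ ⋂ i, Cs i) => doubleLayer_sq_norm_sub_add_le hCscv hP
    hαminus.1 (Set.Ico_subset_Icc_self hαplus) hα hω0 hωsum hrec hz
  have hc : 0 < αminus * (2 - αplus) := mul_pos hαminus.1 (by linarith [hαplus.2])
  have hfejer : IsFejerMonotone (⋂ i, Cs i) x :=
    .of_sq_norm_sub_add_le (fun k => mul_nonneg hc.le (hR0 k)) hdecr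
  obtain ⟨z, hz⟩ := hC
  have hR : Tendsto R atTop (𝓝 0) :=
    tendsto_zero_of_add_mul_le hc (fun k => sq_nonneg ‖x k - z‖) hR0 (hdecr z hz)
  have hmove := doubleLayer_tendsto_dist_succ (fun i y => (hP i y).2)
    (fun k => ⟨hαminus.1.le.trans (hα k).1, (hα k).2.trans hαplus.2.le⟩) hω0 hωsum hrec hR
  have hdist : ∀ i, Tendsto (fun k => infDist (x k) (Cs i)) atTop (𝓝 0) := fun i =>
    tendsto_infDist_of_tendsto_dist_succ_of_visits (hiii (tendsto_sup'_of_tendsto_sum_mul_sq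
      hIkne (fun _ _ => infDist_nonneg) hωminus.1 (fun k i hi => (hω k i hi).1) hR)) hmove
      fun k => (hcover k i).imp fun l ⟨hl, hi⟩ =>
        ⟨hl, Finset.le_sup' (fun j => infDist _ (Cs j)) hi⟩
  obtain ⟨xinf, hxinf, hweak⟩ := hfejer.exists_weakTendsto ⟨z, hz⟩ fun φ hφ p hp =>
    Set.mem_iInter.2 fun i => hp.mem_of_tendsto_infDist (hCscl i) (hCscv i)
      ⟨z, Set.mem_iInter.1 hz i⟩ ((hdist i).comp hφ)
  refine ⟨xinf, hxinf, hweak, fun hreg => ?_⟩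
  have hsup := Tendsto.finset_sup'_nhds_apply Finset.univ_nonempty fun i _ => hdist i
  rw [Finset.sup'_const] at hsup
  obtain ⟨l, hl⟩ := cauchySeq_tendsto_of_complete
    (hfejer.cauchySeq ⟨z, hz⟩ (hreg x (hfejer.isBounded_range ⟨z, hz⟩) hsup))
  rwa [hl.weakTendsto.unique hweak] at hl

/-- Weak convergence of the double-layer projection algorithm, and norm
convergence under bounded regularity of the family of sets. -/
theorem doubleLayer_projection_convergence
    {H : Type*} [NormedAddCommGroup H] [InnerProductSpace ℝ H] [CompleteSpace H]
    {m : ℕ} [NeZero m]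
    (Cs : Fin m → Set H)
    (hCscl : ∀ i, IsClosed (Cs i)) (hCscv : ∀ i, Convex ℝ (Cs i))
    (hCsne : ∀ i, (Cs i).Nonempty) (hC : (⋂ i, Cs i).Nonempty)
    (P : Fin m → H → H)
    (hP : ∀ i, ∀ y : H, P i y ∈ Cs i ∧ ‖y - P i y‖ = infDist y (Cs i))
    (x : ℕ → H) (Ik Jk : ℕ → Finset (Fin m)) (α : ℕ → ℝ) (ω : ℕ → Fin m → ℝ)
    (hIkne : ∀ k, (Ik k).Nonempty) (hIJ : ∀ k, Ik k ⊆ Jk k)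
    (αminus αplus ωminus : ℝ)
    (hαminus : αminus ∈ Set.Ioc (0 : ℝ) 1) (hαplus : αplus ∈ Set.Ico (1 : ℝ) 2)
    (hωminus : ωminus ∈ Set.Ioc (0 : ℝ) 1)
    (hα : ∀ k, α k ∈ Set.Icc αminus αplus)
    (hω : ∀ k, ∀ i ∈ Ik k, ω k i ∈ Set.Icc ωminus 1)
    (hωsum : ∀ k, ∑ i ∈ Ik k, ω k i = 1)
    (hrec : ∀ k, x (k + 1) = x k + α k • ((∑ i ∈ Ik k, ω k i • P i (x k)) - x k))
    (s : ℕ) (hs : 1 ≤ s)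
    (hcover : ∀ k, ∀ i : Fin m, ∃ l < s, i ∈ Jk (k + l))
    (hiii : Tendsto (fun k => (Ik k).sup' (hIkne k) fun i => infDist (x k) (Cs i))
        atTop (nhds 0) →
      Tendsto (fun k => (Jk k).sup' ((hIkne k).mono (hIJ k)) fun i =>
        infDist (x k) (Cs i)) atTop (nhds 0)) :
    ∃ xinf ∈ ⋂ i, Cs i,
      (∀ w : H, Tendsto (fun k => ⟪x k, w⟫) atTop (nhds ⟪xinf, w⟫)) ∧
      ((∀ y : ℕ → H, IsBounded (Set.range y) →
        Tendsto (fun k => Finset.univ.sup' Finset.univ_nonempty fun i =>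
          infDist (y k) (Cs i)) atTop (nhds 0) →
        Tendsto (fun k => infDist (y k) (⋂ i, Cs i)) atTop (nhds 0)) →
        Tendsto x atTop (nhds xinf)) :=
  doubleLayer_projection_convergence_general Cs hCscl hCscv hC P hP x Ik Jk α ω hIkne hIJ αminus
    αplus ωminus hαminus hαplus hωminus hα hω hωsum hrec s hcover hiii
end
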